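/- arXiv:2203.03955 — 5 statements merged into one kernel-verified Lean document; each statement's English description precedes it below -/
import Mathlib

section
/- Let T > 0 and u ∈ W^{1,∞}((0,T),ℝ) with ‖u′‖_{L^∞(0,T)} ≤ 1/2, u₁(T)=0, u₂(T)=0, where u₁, u₂ are the first and second iterated primitives of u vanishing at 0. Then ∫₀ᵀ u₂(t)² dt + ∫₀ᵀ u₁(t)³ dt ≥ (1/2) ∫₀ᵀ u₂(t)² dt. -/
/-! The identity `∫₀ᵀ u₁³ = ∫₀ᵀ u₂² u′` comes from integrating the exact derivative
`(u₂ u₁² − u₂² u)′ = u₁³ − u₂² u′`, whose boundary terms vanish since `u₁` and `u₂` vanish at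
both ends. Then `u′ ≥ −1/2` gives `∫₀ᵀ u₁³ ≥ −(1/2) ∫₀ᵀ u₂²`. -/

open MeasureTheory intervalIntegral Set

theorem hasDerivAt_of_forall_eq_integral {f F : ℝ → ℝ} {a : ℝ} (hf : Continuous f)
    (hF : ∀ t, F t = ∫ s in a..t, f s) (t : ℝ) : HasDerivAt F (f t) t := by
  rw [funext hF]
  exact (hf.integral_hasStrictDerivAt a t).hasDerivAt

theorem IntervalIntegrable.of_hasDerivAt_of_abs_le {u u' : ℝ → ℝ} {a b C : ℝ}
    (hderiv : ∀ t, HasDerivAt u (u' t) t) (hbdd : ∀ t ∈ uIcc a b, |u' t| ≤ C) :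
    IntervalIntegrable u' volume a b := by
  have hmeas : Measurable u' := by
    rw [show u' = deriv u from funext fun t => (hderiv t).deriv.symm]
    exact measurable_deriv u
  refine IntervalIntegrable.mono_fun' (g := fun _ => C) intervalIntegrable_const
    hmeas.aestronglyMeasurable ?_
  rw [Filter.EventuallyLE, ae_restrict_iff' measurableSet_uIoc]
  exact Filter.Eventually.of_forall fun t ht => hbdd t (uIoc_subset_uIcc ht)

theorem integral_cube_eq_integral_sq_mul_deriv {u u' u1 u2 : ℝ → ℝ} {a b : ℝ}
    (hu : ∀ t, HasDerivAt u (u' t) t) (hu1 : ∀ t, HasDerivAt u1 (u t) t)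
    (hu2 : ∀ t, HasDerivAt u2 (u1 t) t) (hu' : IntervalIntegrable u' volume a b)
    (h1a : u1 a = 0) (h1b : u1 b = 0) (h2a : u2 a = 0) (h2b : u2 b = 0) :
    ∫ t in a..b, u1 t ^ 3 = ∫ t in a..b, u2 t ^ 2 * u' t := by
  have hu1_cont : Continuous u1 := continuous_iff_continuousAt.2 fun t => (hu1 t).continuousAt
  have hu2_cont : Continuous u2 := continuous_iff_continuousAt.2 fun t => (hu2 t).continuousAt
  have hint1 : IntervalIntegrable (fun t => u1 t ^ 3) volume a b :=
    (hu1_cont.pow 3).intervalIntegrable a b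
  have hint2 : IntervalIntegrable (fun t => u2 t ^ 2 * u' t) volume a b :=
    hu'.continuousOn_mul (hu2_cont.pow 2).continuousOn
  have hH : ∀ t, HasDerivAt (fun t => u2 t * u1 t ^ 2 - u2 t ^ 2 * u t)
      (u1 t ^ 3 - u2 t ^ 2 * u' t) t := fun t =>
    (((hu2 t).mul ((hu1 t).pow 2)).sub (((hu2 t).pow 2).mul (hu t))).congr_deriv
      (by simp only [Pi.pow_apply]; ring)
  have hftc := integral_eq_sub_of_hasDerivAt (fun t _ => hH t) (hint1.sub hint2)
  rw [integral_sub hint1 hint2, h1a, h1b, h2a, h2b] at hftc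
  linarith

theorem neg_mul_integral_sq_le_integral_sq_mul {f g : ℝ → ℝ} {a b C : ℝ} (hab : a ≤ b)
    (hf : Continuous f) (hg : IntervalIntegrable g volume a b)
    (hbdd : ∀ t ∈ Icc a b, |g t| ≤ C) :
    -C * ∫ t in a..b, f t ^ 2 ≤ ∫ t in a..b, f t ^ 2 * g t := by
  rw [← intervalIntegral.integral_const_mul]
  refine integral_mono_on hab ((continuous_const.mul (hf.pow 2)).intervalIntegrable a b)
    (hg.continuousOn_mul (hf.pow 2).continuousOn) fun t ht => ?_
  have hg_ge : -C ≤ g t := (abs_le.1 (hbdd t ht)).1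
  nlinarith [sq_nonneg (f t)]

theorem sussmann_quadratic_drift
    (T : ℝ) (hT : 0 < T) (u u' u1 u2 : ℝ → ℝ)
    (hderiv : ∀ t, HasDerivAt u (u' t) t)
    (hbdd : ∀ t ∈ Set.Icc (0:ℝ) T, |u' t| ≤ 1 / 2)
    (hu1 : ∀ t, u1 t = ∫ s in (0:ℝ)..t, u s)
    (hu2 : ∀ t, u2 t = ∫ s in (0:ℝ)..t, u1 s)
    (h1T : u1 T = 0) (h2T : u2 T = 0) :
    (1 / 2) * ∫ t in (0:ℝ)..T, (u2 t) ^ 2 ≤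
      (∫ t in (0:ℝ)..T, (u2 t) ^ 2) + ∫ t in (0:ℝ)..T, (u1 t) ^ 3 := by
  have hu_cont : Continuous u := continuous_iff_continuousAt.2 fun t => (hderiv t).continuousAt
  have hu1d := hasDerivAt_of_forall_eq_integral hu_cont hu1
  have hu1_cont : Continuous u1 := continuous_iff_continuousAt.2 fun t => (hu1d t).continuousAt
  have hu2d := hasDerivAt_of_forall_eq_integral hu1_cont hu2
  have hu'_int : IntervalIntegrable u' volume 0 T :=
    .of_hasDerivAt_of_abs_le hderiv fun t ht => hbdd t (by rwa [uIcc_of_le hT.le] at ht)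
  have hcube : ∫ t in (0:ℝ)..T, u1 t ^ 3 = ∫ t in (0:ℝ)..T, u2 t ^ 2 * u' t :=
    integral_cube_eq_integral_sq_mul_deriv hderiv hu1d hu2d hu'_int
      (by simp [hu1]) h1T (by simp [hu2]) h2T
  have hlower := neg_mul_integral_sq_le_integral_sq_mul hT.le
    (continuous_iff_continuousAt.2 fun t => (hu2d t).continuousAt) hu'_int hbdd
  linarith
end

section
/- Let φ ∈ C_c^∞((0,1),ℝ) with ∫₀¹ φ″(θ)² φ′(θ) dθ = 1, and for b ∈ ℝ*, define u_b(t) := sign(b)·|b|^{7/41}·φ⁽³⁾(t/|b|^{4/41}) on [0,|b|^{4/41}], extended by zero. Let u₃ denote the third iterated primitive of u_b vanishing at 0 and u₁, u₂ the first and second. Then ∫₀^{|b|^{4/41}} u₃(t)² dt = |b|^{42/41} ∫₀¹ φ(θ)² dθ and ∫₀^{|b|^{4/41}} u₁(t)² u₂(t) dt = b. -/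
open MeasureTheory intervalIntegral Set

theorem toy_model_oscillating_variation
    (φ : ℝ → ℝ) (hφ : ContDiff ℝ (⊤ : ℕ∞) φ)
    (hsupp : Function.support φ ⊆ Set.Ioo (0:ℝ) 1)
    (hnorm : ∫ θ in (0:ℝ)..1, (iteratedDeriv 2 φ θ) ^ 2 * deriv φ θ = 1)
    (b : ℝ) (hb : b ≠ 0)
    (ub u1 u2 u3 : ℝ → ℝ)
    (hub : ∀ t, ub t = Set.indicator (Set.Icc (0:ℝ) (|b| ^ ((4:ℝ)/41)))
        (fun s => Real.sign b * |b| ^ ((7:ℝ)/41) * iteratedDeriv 3 φ (s / |b| ^ ((4:ℝ)/41))) t)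
    (hu1 : ∀ t, u1 t = ∫ s in (0:ℝ)..t, ub s)
    (hu2 : ∀ t, u2 t = ∫ s in (0:ℝ)..t, u1 s)
    (hu3 : ∀ t, u3 t = ∫ s in (0:ℝ)..t, u2 s) :
    (∫ t in (0:ℝ)..(|b| ^ ((4:ℝ)/41)), (u3 t) ^ 2)
        = |b| ^ ((42:ℝ)/41) * ∫ θ in (0:ℝ)..1, (φ θ) ^ 2
    ∧ (∫ t in (0:ℝ)..(|b| ^ ((4:ℝ)/41)), (u1 t) ^ 2 * u2 t) = b := by
  have hb' : (0:ℝ) < |b| := abs_pos.mpr hb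
  set T : ℝ := |b| ^ ((4:ℝ)/41) with hTdef
  set c : ℝ := Real.sign b * |b| ^ ((7:ℝ)/41) with hcdef
  have hT : 0 < T := Real.rpow_pos_of_pos hb' _
  -- all iterated derivatives of φ vanish on (-∞, 0]
  have hvan : ∀ n : ℕ, ∀ x : ℝ, x ≤ 0 → iteratedDeriv n φ x = 0 := by
    intro n
    induction n with
    | zero =>
      intro x hx
      simp only [iteratedDeriv_zero]
      by_contra h
      exact absurd (hsupp h).1 (not_lt.mpr hx)
    | succ n ih =>
      have hlt : ∀ x : ℝ, x < 0 → iteratedDeriv (n+1) φ x = 0 := by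
        intro x hx
        rw [iteratedDeriv_succ]
        have hev : iteratedDeriv n φ =ᶠ[nhds x] (fun _ => (0:ℝ)) := by
          filter_upwards [Iio_mem_nhds hx] with y hy
          exact ih y (le_of_lt hy)
        rw [hev.deriv_eq, deriv_const]
      intro x hx
      rcases lt_or_eq_of_le hx with h | h
      · exact hlt x h
      · subst h
        have hcont : Continuous (iteratedDeriv (n+1) φ) :=
          hφ.continuous_iteratedDeriv (n+1) (by exact_mod_cast le_top)
        have h1 : Filter.Tendsto (iteratedDeriv (n+1) φ) (nhdsWithin 0 (Set.Iio 0))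
            (nhds (iteratedDeriv (n+1) φ 0)) :=
          (hcont.tendsto 0).mono_left nhdsWithin_le_nhds
        have h2 : Filter.Tendsto (iteratedDeriv (n+1) φ) (nhdsWithin 0 (Set.Iio 0))
            (nhds 0) := by
          refine Filter.Tendsto.congr' ?_ tendsto_const_nhds
          filter_upwards [self_mem_nhdsWithin] with y hy
          exact (hlt y hy).symm
        exact tendsto_nhds_unique h1 h2
  -- key scaled FTC
  have key : ∀ (n : ℕ) (t : ℝ), t ∈ Set.Icc (0:ℝ) T →
      (∫ s in (0:ℝ)..t, iteratedDeriv (n+1) φ (s / T)) = T * iteratedDeriv n φ (t / T) := by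
    intro n t _
    rw [intervalIntegral.integral_comp_div (f := iteratedDeriv (n+1) φ) hT.ne']
    rw [iteratedDeriv_succ]
    rw [intervalIntegral.integral_deriv_eq_sub
        (fun x _ => (hφ.differentiable_iteratedDeriv n (by exact_mod_cast ENat.coe_lt_top n)).differentiableAt)
        (by rw [← iteratedDeriv_succ]
            exact (hφ.continuous_iteratedDeriv (n+1) (by exact_mod_cast le_top)).intervalIntegrable _ _)]
    rw [zero_div, hvan n 0 le_rfl, sub_zero, smul_eq_mul]
  -- closed forms for u1, u2, u3 on [0, T]
  have hu1' : ∀ t ∈ Set.Icc (0:ℝ) T, u1 t = c * (T * iteratedDeriv 2 φ (t / T)) := by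
    intro t ht
    rw [hu1 t]
    have hcg : Set.EqOn ub (fun s => c * iteratedDeriv 3 φ (s / T)) (Set.uIcc (0:ℝ) t) := by
      intro s hs
      rw [Set.uIcc_of_le ht.1] at hs
      have hmem : s ∈ Set.Icc (0:ℝ) T := ⟨hs.1, hs.2.trans ht.2⟩
      rw [hub s, Set.indicator_of_mem hmem]
    rw [intervalIntegral.integral_congr hcg, intervalIntegral.integral_const_mul,
      key 2 t ht]
  have hu2' : ∀ t ∈ Set.Icc (0:ℝ) T, u2 t = c * T * (T * iteratedDeriv 1 φ (t / T)) := by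
    intro t ht
    rw [hu2 t]
    have hcg : Set.EqOn u1 (fun s => c * T * iteratedDeriv 2 φ (s / T)) (Set.uIcc (0:ℝ) t) := by
      intro s hs
      rw [Set.uIcc_of_le ht.1] at hs
      rw [hu1' s ⟨hs.1, hs.2.trans ht.2⟩]; ring
    rw [intervalIntegral.integral_congr hcg, intervalIntegral.integral_const_mul,
      key 1 t ht]
  have hu3' : ∀ t ∈ Set.Icc (0:ℝ) T, u3 t = c * T * T * (T * φ (t / T)) := by
    intro t ht
    rw [hu3 t]
    have hcg : Set.EqOn u2 (fun s => c * T * T * iteratedDeriv 1 φ (s / T)) (Set.uIcc (0:ℝ) t) := by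
      intro s hs
      rw [Set.uIcc_of_le ht.1] at hs
      rw [hu2' s ⟨hs.1, hs.2.trans ht.2⟩]; ring
    rw [intervalIntegral.integral_congr hcg, intervalIntegral.integral_const_mul,
      key 0 t ht, iteratedDeriv_zero]
  -- sign facts
  have hs2 : Real.sign b ^ 2 = 1 := by
    rcases lt_or_gt_of_ne hb with h | h
    · rw [Real.sign_of_neg h]; norm_num
    · rw [Real.sign_of_pos h]; norm_num
  have hsabs : Real.sign b * |b| = b := by
    rcases lt_or_gt_of_ne hb with h | h
    · rw [Real.sign_of_neg h, abs_of_neg h]; ring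
    · rw [Real.sign_of_pos h, abs_of_pos h]; ring
  have hrpow : ∀ p q : ℝ, |b| ^ p * |b| ^ q = |b| ^ (p + q) := fun p q =>
    (Real.rpow_add hb' p q).symm
  constructor
  · -- first integral
    have hcg : Set.EqOn (fun t => (u3 t) ^ 2)
        (fun t => c^2 * T^6 * ((fun θ => φ θ ^ 2) (t / T))) (Set.uIcc (0:ℝ) T) := by
      intro t ht
      rw [Set.uIcc_of_le hT.le] at ht
      simp only
      rw [hu3' t ht]; ring
    rw [intervalIntegral.integral_congr hcg, intervalIntegral.integral_const_mul,
      intervalIntegral.integral_comp_div (f := fun θ => φ θ ^ 2) hT.ne',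
      zero_div, div_self hT.ne', smul_eq_mul]
    have hC : c^2 * T^6 * T = |b| ^ ((42:ℝ)/41) := by
      have h6 : T ^ 6 = |b| ^ ((24:ℝ)/41) := by
        rw [hTdef, ← Real.rpow_natCast (|b| ^ ((4:ℝ)/41)) 6, ← Real.rpow_mul hb'.le]
        norm_num
      have h7 : (|b| ^ ((7:ℝ)/41)) ^ 2 = |b| ^ ((14:ℝ)/41) := by
        rw [← Real.rpow_natCast (|b| ^ ((7:ℝ)/41)) 2, ← Real.rpow_mul hb'.le]
        norm_num
      rw [hcdef, mul_pow, hs2, one_mul, h7, h6, hTdef, hrpow, hrpow]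
      norm_num
    rw [← hC]; ring
  · -- second integral
    have hcg : Set.EqOn (fun t => (u1 t) ^ 2 * u2 t)
        (fun t => c^3 * T^4 *
          ((fun θ => (iteratedDeriv 2 φ θ) ^ 2 * deriv φ θ) (t / T))) (Set.uIcc (0:ℝ) T) := by
      intro t ht
      rw [Set.uIcc_of_le hT.le] at ht
      simp only
      rw [hu1' t ht, hu2' t ht, iteratedDeriv_one]; ring
    rw [intervalIntegral.integral_congr hcg, intervalIntegral.integral_const_mul,
      intervalIntegral.integral_comp_div
        (f := fun θ => (iteratedDeriv 2 φ θ) ^ 2 * deriv φ θ) hT.ne',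
      zero_div, div_self hT.ne', smul_eq_mul, hnorm, mul_one]
    have h4 : T ^ 4 = |b| ^ ((16:ℝ)/41) := by
      rw [hTdef, ← Real.rpow_natCast (|b| ^ ((4:ℝ)/41)) 4, ← Real.rpow_mul hb'.le]
      norm_num
    have h3 : c ^ 3 = Real.sign b * |b| ^ ((21:ℝ)/41) := by
      have : c ^ 3 = (Real.sign b ^ 2) * Real.sign b * (|b| ^ ((7:ℝ)/41)) ^ 3 := by
        rw [hcdef]; ring
      rw [this, hs2, one_mul, ← Real.rpow_natCast (|b| ^ ((7:ℝ)/41)) 3,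
        ← Real.rpow_mul hb'.le]
      norm_num
    rw [h3, h4, hTdef, mul_assoc, mul_assoc, hrpow, hrpow]
    norm_num
    exact hsabs
end

section
/- Let T > 0 and u ∈ H²₀((0,T),ℝ) with iterated primitives u₁, u₂, u₃ vanishing at 0, satisfying u₂(T) = 0 and u₃(T) = 0. Then ‖u₁‖⁴_{L²(0,T)} ≤ ‖u′‖²_{L²(0,T)} · ‖u₃‖²_{L²(0,T)}. -/
open MeasureTheory intervalIntegral Set

/-!
Since `u₂` and `u₃` vanish at both ends of `[0, T]`, two integrations by parts move the
derivative across without boundary terms: `∫ u₁ u₁ = -∫ u u₂ = ∫ u' u₃`. Cauchy–Schwarz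
applied to the right-hand side gives the inequality.
-/

/-- The iterated primitives of `u` vanishing at `0`. -/
noncomputable def iterPrim (u : ℝ → ℝ) : ℕ → ℝ → ℝ
  | 0 => u
  | n + 1 => fun t => ∫ s in (0:ℝ)..t, iterPrim u n s

theorem sq_integral_mul_le_integral_sq_mul_integral_sq {α : Type*} [MeasurableSpace α]
    {μ : Measure α} {f g : α → ℝ} (hf : MemLp f 2 μ) (hg : MemLp g 2 μ) :
    (∫ x, f x * g x ∂μ) ^ 2 ≤ (∫ x, f x ^ 2 ∂μ) * ∫ x, g x ^ 2 ∂μ := by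
  have inner_toLp {φ ψ : α → ℝ} (hφ : MemLp φ 2 μ) (hψ : MemLp ψ 2 μ) :
      inner ℝ (hφ.toLp φ) (hψ.toLp ψ) = ∫ x, φ x * ψ x ∂μ := by
    rw [L2.inner_def]
    refine integral_congr_ae ?_
    filter_upwards [hφ.coeFn_toLp, hψ.coeFn_toLp] with x hφx hψx
    simp [hφx, hψx, mul_comm]
  simpa only [inner_toLp, sq] using real_inner_mul_inner_self_le (hf.toLp f) (hg.toLp g)

theorem integral_mul_eq_neg_integral_deriv_mul_primitive {f f' g : ℝ → ℝ} {T : ℝ}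
    (hf : ∀ t, HasDerivAt f (f' t) t) (hf' : IntervalIntegrable f' volume 0 T)
    (hg : Continuous g) (hgT : ∫ s in (0:ℝ)..T, g s = 0) :
    ∫ t in (0:ℝ)..T, f t * g t = -∫ t in (0:ℝ)..T, f' t * ∫ s in (0:ℝ)..t, g s := by
  have hG (t : ℝ) : HasDerivAt (fun t => ∫ s in (0:ℝ)..t, g s) (g t) t :=
    (hg.integral_hasStrictDerivAt 0 t).hasDerivAt
  rw [integral_mul_deriv_eq_deriv_mul (fun t _ => hf t) (fun t _ => hG t) hf'
    (hg.intervalIntegrable 0 T), hgT, integral_same]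
  ring

theorem continuous_iterPrim {u : ℝ → ℝ} (hu : Continuous u) : ∀ n, Continuous (iterPrim u n)
  | 0 => hu
  | n + 1 => continuous_primitive (fun a b => (continuous_iterPrim hu n).intervalIntegrable a b) 0

theorem quartic_interpolation_general
    (T : ℝ) (hT : 0 < T) (u u' : ℝ → ℝ)
    (hderiv : ∀ t, HasDerivAt u (u' t) t)
    (hu'L2 : MeasureTheory.MemLp u' 2 (MeasureTheory.volume.restrict (Set.Ioc 0 T)))
    (h2T : iterPrim u 2 T = 0) (h3T : iterPrim u 3 T = 0) :
    (∫ t in (0:ℝ)..T, (iterPrim u 1 t) ^ 2) ^ 2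
      ≤ (∫ t in (0:ℝ)..T, (u' t) ^ 2) * ∫ t in (0:ℝ)..T, (iterPrim u 3 t) ^ 2 := by
  have hu : Continuous u := continuous_iff_continuousAt.2 fun t => (hderiv t).continuousAt
  have hu' : IntervalIntegrable u' volume 0 T :=
    (intervalIntegrable_iff_integrableOn_Ioc_of_le hT.le).2 (hu'L2.integrable one_le_two)
  have hu₃ : MemLp (iterPrim u 3) 2 (volume.restrict (Ioc 0 T)) :=
    (memLp_two_iff_integrable_sq (continuous_iterPrim hu 3).aestronglyMeasurable).2
      ((continuous_iterPrim hu 3).pow 2).integrableOn_Ioc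
  have by_parts :
      ∫ t in (0:ℝ)..T, iterPrim u 1 t ^ 2 = ∫ t in (0:ℝ)..T, u' t * iterPrim u 3 t :=
    calc ∫ t in (0:ℝ)..T, iterPrim u 1 t ^ 2
        = ∫ t in (0:ℝ)..T, iterPrim u 1 t * iterPrim u 1 t := by simp only [sq]
      _ = -∫ t in (0:ℝ)..T, u t * iterPrim u 2 t :=
        integral_mul_eq_neg_integral_deriv_mul_primitive
          (fun t => (hu.integral_hasStrictDerivAt 0 t).hasDerivAt) (hu.intervalIntegrable 0 T)
          (continuous_iterPrim hu 1) h2T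
      _ = ∫ t in (0:ℝ)..T, u' t * iterPrim u 3 t := neg_eq_iff_eq_neg.2 <|
        integral_mul_eq_neg_integral_deriv_mul_primitive hderiv hu' (continuous_iterPrim hu 2) h3T
  rw [by_parts]
  simp only [integral_of_le hT.le]
  exact sq_integral_mul_le_integral_sq_mul_integral_sq hu'L2 hu₃

theorem quartic_interpolation
    (T : ℝ) (hT : 0 < T) (u u' : ℝ → ℝ)
    (hderiv : ∀ t, HasDerivAt u (u' t) t)
    (hu'L2 : MeasureTheory.MemLp u' 2 (MeasureTheory.volume.restrict (Set.Ioc 0 T)))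
    (hu0 : u 0 = 0) (huT : u T = 0) (hu'0 : u' 0 = 0) (hu'T : u' T = 0)
    (h2T : iterPrim u 2 T = 0) (h3T : iterPrim u 3 T = 0) :
    (∫ t in (0:ℝ)..T, (iterPrim u 1 t) ^ 2) ^ 2
      ≤ (∫ t in (0:ℝ)..T, (u' t) ^ 2) * ∫ t in (0:ℝ)..T, (iterPrim u 3 t) ^ 2 :=
  quartic_interpolation_general T hT u u' hderiv hu'L2 h2T h3T
end

section
/- Let T > 0, m ∈ ℕ, H ∈ C²(ℝ²,ℂ), and u ∈ L²((0,T),ℝ) with iterated primitives u_m, u_{m+1} vanishing at 0 and satisfying u_{m+1}(T) = 0. Then ∫₀ᵀ u_m(t) ∫₀ᵗ u_m(τ) H(t,τ) dτ dt = ∫₀ᵀ u_{m+1}(t)² ((1/2)(d/dt)(H(t,t)) − ∂₁H(t,t)) dt + ∫₀ᵀ u_{m+1}(t) ∫₀ᵗ u_{m+1}(τ) ∂₁∂₂H(t,τ) dτ dt. -/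
/-!
Write `v = u_m` and `V = u_{m+1}`, so that `V` is a primitive of the merely integrable `v` with
`V(0) = V(T) = 0`. Integrating by parts in `τ` splits the left side into the diagonal term
`∫ v V H(t,t)`, which equals `-(1/2) ∫ V² (d/dt) H(t,t)` because `v V` has primitive `V²/2`, and
`-∫ v(t) ∫₀ᵗ V(τ) ∂₂H(t,τ) dτ dt`. Exchanging the order of integration and integrating by parts
in `t` turns the latter into `∫ V² ∂₂H(t,t) + ∫ V(t) ∫₀ᵗ V(τ) ∂₁∂₂H(t,τ) dτ dt`, and
`(d/dt) H(t,t) = ∂₁H(t,t) + ∂₂H(t,t)` gives the stated form. Every integration by parts is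
against a primitive of an `L¹` function, so it is proved by Fubini on the triangle `τ ≤ t`
rather than from a derivative of that primitive.
-/

open MeasureTheory intervalIntegral Set

section TriangleFubini

variable {E : Type*} [NormedAddCommGroup E] {a b : ℝ}

lemma integrable_indicator_Iic_prod {F : ℝ → ℝ → E} {μ ν : Measure ℝ}
    (hF : Integrable (Function.uncurry F) (μ.prod ν)) :
    Integrable (fun p : ℝ × ℝ => (Iic p.1).indicator (F p.1) p.2) (μ.prod ν) := by
  refine (hF.indicator (measurableSet_le measurable_snd measurable_fst)).congr
    (Filter.Eventually.of_forall fun p => ?_)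
  by_cases h : p.2 ≤ p.1 <;> simp [h, Function.uncurry]

variable [NormedSpace ℝ E]

lemma intervalIntegral_eq_setIntegral_indicator_Iic {t : ℝ} (ht : t ∈ Ioc a b) (g : ℝ → E) :
    ∫ τ in a..t, g τ = ∫ τ in Ioc a b, (Iic t).indicator g τ := by
  rw [setIntegral_indicator measurableSet_Iic, Ioc_inter_Iic, inf_eq_right.2 ht.2,
    integral_of_le ht.1.le]

lemma intervalIntegral_eq_setIntegral_indicator_Ici {τ : ℝ} (hτ : τ ∈ Ioc a b)
    (g : ℝ → E) : ∫ t in τ..b, g t = ∫ t in Ioc a b, (Ici τ).indicator g t := by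
  have : Ioc a b ∩ Ici τ = Icc τ b := by
    ext t; simp only [mem_inter_iff, mem_Ioc, mem_Ici, mem_Icc]
    constructor
    · rintro ⟨⟨-, htb⟩, hτt⟩; exact ⟨hτt, htb⟩
    · rintro ⟨hτt, htb⟩; exact ⟨⟨hτ.1.trans_le hτt, htb⟩, hτt⟩
  rw [setIntegral_indicator measurableSet_Ici, this, integral_Icc_eq_integral_Ioc,
    integral_of_le hτ.2]

variable {F : ℝ → ℝ → E}

lemma intervalIntegrable_intervalIntegral_upper_limit (hab : a ≤ b)
    (hF : Integrable (Function.uncurry F)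
      ((volume.restrict (Ioc a b)).prod (volume.restrict (Ioc a b)))) :
    IntervalIntegrable (fun t => ∫ τ in a..t, F t τ) volume a b := by
  rw [intervalIntegrable_iff_integrableOn_Ioc_of_le hab]
  have : IntegrableOn (fun t => ∫ τ in Ioc a b, (Iic t).indicator (F t) τ) (Ioc a b) :=
    (integrable_indicator_Iic_prod hF).integral_prod_left
  exact this.congr_fun
    (fun t ht => (intervalIntegral_eq_setIntegral_indicator_Iic ht (F t)).symm) measurableSet_Ioc

lemma intervalIntegrable_intervalIntegral_lower_limit (hab : a ≤ b)
    (hF : Integrable (Function.uncurry F)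
      ((volume.restrict (Ioc a b)).prod (volume.restrict (Ioc a b)))) :
    IntervalIntegrable (fun τ => ∫ t in τ..b, F t τ) volume a b := by
  rw [intervalIntegrable_iff_integrableOn_Ioc_of_le hab]
  have : IntegrableOn (fun τ => ∫ t in Ioc a b, (Iic t).indicator (F t) τ) (Ioc a b) :=
    (integrable_indicator_Iic_prod hF).integral_prod_right
  refine this.congr_fun (fun τ hτ => ?_) measurableSet_Ioc
  rw [intervalIntegral_eq_setIntegral_indicator_Ici hτ]
  rfl

lemma intervalIntegral_intervalIntegral_triangle_swap (hab : a ≤ b)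
    (hF : Integrable (Function.uncurry F)
      ((volume.restrict (Ioc a b)).prod (volume.restrict (Ioc a b)))) :
    ∫ t in a..b, ∫ τ in a..t, F t τ = ∫ τ in a..b, ∫ t in τ..b, F t τ := by
  have left : ∫ t in a..b, ∫ τ in a..t, F t τ
      = ∫ t in Ioc a b, ∫ τ in Ioc a b, (Iic t).indicator (F t) τ := by
    rw [integral_of_le hab]
    exact setIntegral_congr_fun measurableSet_Ioc fun t ht =>
      intervalIntegral_eq_setIntegral_indicator_Iic ht (F t)
  have right : ∫ τ in a..b, ∫ t in τ..b, F t τ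
      = ∫ τ in Ioc a b, ∫ t in Ioc a b, (Iic t).indicator (F t) τ := by
    rw [integral_of_le hab]
    refine setIntegral_congr_fun measurableSet_Ioc fun τ hτ => ?_
    rw [intervalIntegral_eq_setIntegral_indicator_Ici hτ]
    rfl
  rw [left, right]
  exact integral_integral_swap (f := fun t τ => (Iic t).indicator (F t) τ)
    (integrable_indicator_Iic_prod hF)

end TriangleFubini

section Primitive

variable {𝕜 : Type*} [RCLike 𝕜] {a b : ℝ} {f F : ℝ → 𝕜}

/-- The substitute for `∀ t, HasDerivAt F (f t) t` when `f` is only integrable. -/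
def IsPrimitiveOn (f F : ℝ → 𝕜) (a b : ℝ) : Prop :=
  ∀ t ∈ Icc a b, ∫ s in a..t, f s = F t - F a

lemma IsPrimitiveOn.continuousOn (hf : IntervalIntegrable f volume a b)
    (hF : IsPrimitiveOn f F a b) : ContinuousOn F (Icc a b) := by
  refine ContinuousOn.congr (f := fun t => F a + ∫ s in a..t, f s) ?_ fun t ht => ?_
  · exact continuousOn_const.add
      ((continuousOn_primitive_interval' hf left_mem_uIcc).mono Icc_subset_uIcc)
  · simp only [hF t ht, add_sub_cancel]

lemma IsPrimitiveOn.mono (hf : IntervalIntegrable f volume a b) (hF : IsPrimitiveOn f F a b)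
    {c d : ℝ} (hc : a ≤ c) (hd : d ≤ b) : IsPrimitiveOn f F c d := by
  intro t ht
  have hsub : ∀ x ∈ Icc c d, uIcc a x ⊆ uIcc a b := fun x hx =>
    uIcc_subset_uIcc left_mem_uIcc (mem_uIcc_of_le (hc.trans hx.1) (hx.2.trans hd))
  rw [← integral_interval_sub_left (hf.mono_set (hsub t ht))
    (hf.mono_set (hsub c ⟨le_rfl, ht.1.trans ht.2⟩)), hF t ⟨hc.trans ht.1, ht.2.trans hd⟩,
    hF c ⟨hc, (ht.1.trans ht.2).trans hd⟩]
  ring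

lemma integral_mul_eq_sub_integral_mul_deriv (hab : a ≤ b)
    (hf : IntervalIntegrable f volume a b) (hF : IsPrimitiveOn f F a b) {g g' : ℝ → 𝕜}
    (hg : ∀ t ∈ Icc a b, HasDerivAt g (g' t) t) (hg' : ContinuousOn g' (Icc a b)) :
    ∫ t in a..b, f t * g t = F b * g b - F a * g a - ∫ t in a..b, F t * g' t := by
  have hg'i : IntervalIntegrable g' volume a b := hg'.intervalIntegrable_of_Icc hab
  have hgc : ContinuousOn g (Icc a b) := fun t ht => (hg t ht).continuousAt.continuousWithinAt
  have hFc : ContinuousOn F (Icc a b) := hF.continuousOn hf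
  rw [← uIcc_of_le hab] at hgc hFc
  have hftc : ∀ t ∈ Icc a b, g b - g t = ∫ s in t..b, g' s := fun t ht =>
    (integral_eq_sub_of_hasDerivAt (fun x hx => hg x (uIcc_subset_Icc ht ⟨hab, le_rfl⟩ hx))
      (hg'i.mono_set (uIcc_subset_uIcc (by rwa [uIcc_of_le hab]) right_mem_uIcc))).symm
  have hswap : ∫ t in a..b, f t * (g b - g t) = ∫ t in a..b, (F t - F a) * g' t := by
    calc ∫ t in a..b, f t * (g b - g t) = ∫ τ in a..b, ∫ t in τ..b, g' t * f τ := by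
          refine integral_congr fun τ hτ => ?_
          rw [uIcc_of_le hab] at hτ
          simp only [hftc τ hτ, ← intervalIntegral.integral_const_mul, mul_comm]
      _ = ∫ t in a..b, ∫ τ in a..t, g' t * f τ :=
          (intervalIntegral_intervalIntegral_triangle_swap (F := fun t τ => g' t * f τ) hab
            (hg'i.1.mul_prod hf.1)).symm
      _ = ∫ t in a..b, (F t - F a) * g' t := by
          refine integral_congr fun t ht => ?_
          rw [uIcc_of_le hab] at ht
          rw [intervalIntegral.integral_const_mul, hF t ht, mul_comm]
  calc ∫ t in a..b, f t * g t = ∫ t in a..b, (f t * g b - f t * (g b - g t)) :=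
        integral_congr fun t _ => by ring
    _ = (F b - F a) * g b - ∫ t in a..b, (F t - F a) * g' t := by
        rw [integral_sub (hf.mul_const _)
            (hf.mul_continuousOn (g := fun t => g b - g t) (continuousOn_const.sub hgc)),
          intervalIntegral.integral_mul_const, hF b ⟨hab, le_rfl⟩, hswap]
    _ = F b * g b - F a * g a - ∫ t in a..b, F t * g' t := by
        have hFg' : IntervalIntegrable (fun t => F t * g' t) volume a b :=
          hg'i.continuousOn_mul hFc
        simp only [sub_mul]
        rw [integral_sub hFg' (hg'i.const_mul _), intervalIntegral.integral_const_mul,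
          ← hftc a ⟨le_rfl, hab⟩]
        ring

lemma integral_mul_eq_sq_sub_sq_div_two (hab : a ≤ b)
    (hf : IntervalIntegrable f volume a b) (hF : IsPrimitiveOn f F a b) :
    ∫ t in a..b, f t * F t = (F b ^ 2 - F a ^ 2) / 2 := by
  have hfF : IntervalIntegrable (fun t => f t * F t) volume a b :=
    hf.mul_continuousOn ((hF.continuousOn hf).mono (uIcc_of_le hab).subset)
  have hswap :
      ∫ t in a..b, (f t * F t - f t * F a) = ∫ τ in a..b, (f τ * F b - f τ * F τ) := by
    calc ∫ t in a..b, (f t * F t - f t * F a) = ∫ t in a..b, ∫ τ in a..t, f t * f τ := by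
          refine integral_congr fun t ht => ?_
          rw [uIcc_of_le hab] at ht
          rw [intervalIntegral.integral_const_mul, hF t ht, mul_sub]
      _ = ∫ τ in a..b, ∫ t in τ..b, f t * f τ :=
          intervalIntegral_intervalIntegral_triangle_swap (F := fun t τ => f t * f τ) hab
            (hf.1.mul_prod hf.1)
      _ = ∫ τ in a..b, (f τ * F b - f τ * F τ) := by
          refine integral_congr fun τ hτ => ?_
          rw [uIcc_of_le hab] at hτ
          rw [intervalIntegral.integral_mul_const, hF.mono hf hτ.1 le_rfl b ⟨hτ.2, le_rfl⟩]
          ring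
  rw [integral_sub hfF (hf.mul_const _), integral_sub (hf.mul_const _) hfF,
    intervalIntegral.integral_mul_const, intervalIntegral.integral_mul_const,
    hF b ⟨hab, le_rfl⟩] at hswap
  linear_combination hswap / 2

lemma IsPrimitiveOn.mul_self (hf : IntervalIntegrable f volume a b) (hF : IsPrimitiveOn f F a b) :
    IsPrimitiveOn (fun t => f t * F t) (fun t => F t ^ 2 / 2) a b := fun t ht => by
  rw [integral_mul_eq_sq_sub_sq_div_two ht.1
    (hf.mono_set (uIcc_subset_uIcc left_mem_uIcc (mem_uIcc_of_le ht.1 ht.2)))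
    (hF.mono hf le_rfl ht.2)]
  ring

end Primitive

section Kernel

variable {𝕜 : Type*} [RCLike 𝕜] {a b : ℝ}

lemma integrable_prod_mul_mul_kernel {f g : ℝ → 𝕜} {K : ℝ → ℝ → 𝕜}
    (hf : IntegrableOn f (Ioc a b)) (hg : IntegrableOn g (Ioc a b))
    (hK : Continuous (Function.uncurry K)) :
    Integrable (Function.uncurry fun t τ => f t * (g τ * K t τ))
      ((volume.restrict (Ioc a b)).prod (volume.restrict (Ioc a b))) := by
  obtain ⟨C, hC⟩ := (isCompact_Icc.prod isCompact_Icc).exists_bound_of_continuousOn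
    (s := Icc a b ×ˢ Icc a b) hK.continuousOn
  have hbound : ∀ᵐ p ∂(volume.restrict (Ioc a b)).prod (volume.restrict (Ioc a b)),
      ‖Function.uncurry K p‖ ≤ C := by
    rw [Measure.prod_restrict]
    filter_upwards [ae_restrict_mem (measurableSet_Ioc.prod measurableSet_Ioc)] with p hp
    exact hC p ⟨Ioc_subset_Icc_self hp.1, Ioc_subset_Icc_self hp.2⟩
  refine ((hf.mul_prod hg).bdd_mul hK.aestronglyMeasurable hbound).congr
    (Filter.Eventually.of_forall fun p => ?_)
  simp only [Function.uncurry]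
  ring

lemma intervalIntegrable_mul_intervalIntegral_mul_kernel (hab : a ≤ b) {f g : ℝ → 𝕜}
    {K : ℝ → ℝ → 𝕜} (hf : IntegrableOn f (Ioc a b)) (hg : IntegrableOn g (Ioc a b))
    (hK : Continuous (Function.uncurry K)) :
    IntervalIntegrable (fun t => f t * ∫ τ in a..t, g τ * K t τ) volume a b := by
  simp only [← intervalIntegral.integral_const_mul]
  exact intervalIntegrable_intervalIntegral_upper_limit hab
    (integrable_prod_mul_mul_kernel hf hg hK)

lemma integral_mul_integral_primitive_mul_kernel (hab : a ≤ b) {f F : ℝ → 𝕜}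
    (hf : IntervalIntegrable f volume a b) (hF : IsPrimitiveOn f F a b)
    {K K₁ : ℝ → ℝ → 𝕜}
    (hK : ∀ t τ, HasDerivAt (fun s => K s τ) (K₁ t τ) t)
    (hKc : Continuous (Function.uncurry K)) (hK₁c : Continuous (Function.uncurry K₁)) :
    ∫ t in a..b, f t * ∫ τ in a..t, F τ * K t τ
      = F b * (∫ τ in a..b, F τ * K b τ) - (∫ t in a..b, F t ^ 2 * K t t)
        - ∫ t in a..b, F t * ∫ τ in a..t, F τ * K₁ t τ := by
  have hFc : ContinuousOn F (uIcc a b) := (uIcc_of_le hab).symm ▸ hF.continuousOn hf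
  have hFi : IntegrableOn F (Ioc a b) :=
    (hF.continuousOn hf).integrableOn_Icc.mono_set Ioc_subset_Icc_self
  have inner : ∀ τ ∈ Icc a b, ∫ t in τ..b, f t * (F τ * K t τ)
      = F b * (F τ * K b τ) - F τ ^ 2 * K τ τ - ∫ t in τ..b, F t * (F τ * K₁ t τ) := by
    intro τ hτ
    have hibp := integral_mul_eq_sub_integral_mul_deriv hτ.2
      (hf.mono_set (uIcc_subset_uIcc (mem_uIcc_of_le hτ.1 hτ.2) right_mem_uIcc))
      (hF.mono hf hτ.1 le_rfl) (fun t _ => hK t τ) (hK₁c.uncurry_right τ).continuousOn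
    calc ∫ t in τ..b, f t * (F τ * K t τ) = F τ * ∫ t in τ..b, f t * K t τ := by
          rw [← intervalIntegral.integral_const_mul]
          exact integral_congr fun t _ => by ring
      _ = _ := by
          rw [hibp, mul_sub, mul_sub, ← intervalIntegral.integral_const_mul]
          congr 1
          · ring
          · exact integral_congr fun t _ => by ring
  have i1 : IntervalIntegrable (fun τ => F b * (F τ * K b τ)) volume a b :=
    ((hFc.mul (hKc.uncurry_left b).continuousOn).intervalIntegrable).const_mul _
  have i2 : IntervalIntegrable (fun τ => F τ ^ 2 * K τ τ) volume a b :=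
    ((hFc.pow 2).mul
      (hKc.comp (continuous_id.prodMk continuous_id)).continuousOn).intervalIntegrable
  have i3 : IntervalIntegrable (fun τ => ∫ t in τ..b, F t * (F τ * K₁ t τ)) volume a b :=
    intervalIntegrable_intervalIntegral_lower_limit hab
      (integrable_prod_mul_mul_kernel hFi hFi hK₁c)
  calc ∫ t in a..b, f t * ∫ τ in a..t, F τ * K t τ
      = ∫ t in a..b, ∫ τ in a..t, f t * (F τ * K t τ) := by
        simp only [intervalIntegral.integral_const_mul]
    _ = ∫ τ in a..b, ∫ t in τ..b, f t * (F τ * K t τ) :=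
        intervalIntegral_intervalIntegral_triangle_swap hab
          (integrable_prod_mul_mul_kernel hf.1 hFi hKc)
    _ = ∫ τ in a..b, (F b * (F τ * K b τ) - F τ ^ 2 * K τ τ
          - ∫ t in τ..b, F t * (F τ * K₁ t τ)) :=
        integral_congr fun τ hτ => inner τ (by rwa [uIcc_of_le hab] at hτ)
    _ = F b * (∫ τ in a..b, F τ * K b τ) - (∫ t in a..b, F t ^ 2 * K t t)
          - ∫ τ in a..b, ∫ t in τ..b, F t * (F τ * K₁ t τ) := by
        rw [integral_sub (i1.sub i2) i3, integral_sub i1 i2, intervalIntegral.integral_const_mul]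
    _ = _ := by
        rw [← intervalIntegral_intervalIntegral_triangle_swap hab
          (integrable_prod_mul_mul_kernel hFi hFi hK₁c)]
        simp only [intervalIntegral.integral_const_mul]

theorem integral_mul_integral_mul_kernel_eq (hab : a ≤ b) {f F : ℝ → 𝕜}
    (hf : IntervalIntegrable f volume a b) (hF : IsPrimitiveOn f F a b)
    (hFa : F a = 0) (hFb : F b = 0) {H H₂ H₁₂ : ℝ → ℝ → 𝕜} {h' : ℝ → 𝕜}
    (hH : ∀ t τ, HasDerivAt (H t) (H₂ t τ) τ)
    (hH₂ : ∀ t τ, HasDerivAt (fun s => H₂ s τ) (H₁₂ t τ) t)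
    (hdiag : ∀ t, HasDerivAt (fun s => H s s) (h' t) t)
    (hH₂c : Continuous (Function.uncurry H₂))
    (hH₁₂c : Continuous (Function.uncurry H₁₂)) (hh'c : Continuous h') :
    ∫ t in a..b, f t * ∫ τ in a..t, f τ * H t τ
      = (∫ t in a..b, F t ^ 2 * (H₂ t t - h' t / 2))
        + ∫ t in a..b, F t * ∫ τ in a..t, F τ * H₁₂ t τ := by
  have hFc : ContinuousOn F (uIcc a b) := (uIcc_of_le hab).symm ▸ hF.continuousOn hf
  have hFi : IntegrableOn F (Ioc a b) :=
    (hF.continuousOn hf).integrableOn_Icc.mono_set Ioc_subset_Icc_self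
  have hhc : Continuous fun t => H t t :=
    continuous_iff_continuousAt.2 fun t => (hdiag t).continuousAt
  have inner : ∀ t ∈ Icc a b,
      ∫ τ in a..t, f τ * H t τ = F t * H t t - ∫ τ in a..t, F τ * H₂ t τ := by
    intro t ht
    rw [integral_mul_eq_sub_integral_mul_deriv ht.1
      (hf.mono_set (uIcc_subset_uIcc left_mem_uIcc (mem_uIcc_of_le ht.1 ht.2)))
      (hF.mono hf le_rfl ht.2) (fun τ _ => hH t τ) (hH₂c.uncurry_left t).continuousOn,
      hFa, zero_mul, sub_zero]
  have diag : ∫ t in a..b, f t * F t * H t t = -∫ t in a..b, F t ^ 2 / 2 * h' t := by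
    rw [integral_mul_eq_sub_integral_mul_deriv hab (hf.mul_continuousOn hFc) (hF.mul_self hf)
      (fun t _ => hdiag t) hh'c.continuousOn, hFa, hFb]
    ring
  have offdiag := integral_mul_integral_primitive_mul_kernel hab hf hF hH₂ hH₂c hH₁₂c
  rw [hFb, zero_mul, zero_sub] at offdiag
  have i1 : IntervalIntegrable (fun t => F t ^ 2 * H₂ t t) volume a b :=
    ((hFc.pow 2).mul
      (hH₂c.comp (continuous_id.prodMk continuous_id)).continuousOn).intervalIntegrable
  have i2 : IntervalIntegrable (fun t => F t ^ 2 / 2 * h' t) volume a b :=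
    (((hFc.pow 2).div_const 2).mul hh'c.continuousOn).intervalIntegrable
  calc ∫ t in a..b, f t * ∫ τ in a..t, f τ * H t τ
      = ∫ t in a..b, (f t * F t * H t t - f t * ∫ τ in a..t, F τ * H₂ t τ) :=
        integral_congr fun t ht => by
          rw [inner t (by rwa [uIcc_of_le hab] at ht)]
          ring
    _ = (∫ t in a..b, F t ^ 2 * H₂ t t) - (∫ t in a..b, F t ^ 2 / 2 * h' t)
          + ∫ t in a..b, F t * ∫ τ in a..t, F τ * H₁₂ t τ := by
        rw [integral_sub ((hf.mul_continuousOn hFc).mul_continuousOn hhc.continuousOn)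
          (intervalIntegrable_mul_intervalIntegral_mul_kernel hab hf.1 hFi hH₂c), diag, offdiag]
        ring
    _ = _ := by
        rw [← integral_sub i1 i2]
        congr 1
        exact integral_congr fun t _ => by ring

end Kernel

section PartialDerivatives

variable {E : Type*} [NormedAddCommGroup E] [NormedSpace ℝ E] {H : ℝ → ℝ → E} {t τ : ℝ}

lemma hasDerivAt_partial_left (h : DifferentiableAt ℝ (Function.uncurry H) (t, τ)) :
    HasDerivAt (fun s => H s τ) (fderiv ℝ (Function.uncurry H) (t, τ) (1, 0)) t :=
  h.hasFDerivAt.comp_hasDerivAt (f := fun s => (s, τ)) t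
    ((hasDerivAt_id t).prodMk (hasDerivAt_const t τ))

lemma hasDerivAt_partial_right (h : DifferentiableAt ℝ (Function.uncurry H) (t, τ)) :
    HasDerivAt (fun r => H t r) (fderiv ℝ (Function.uncurry H) (t, τ) (0, 1)) τ :=
  h.hasFDerivAt.comp_hasDerivAt (f := fun r => (t, r)) τ
    ((hasDerivAt_const τ t).prodMk (hasDerivAt_id τ))

lemma hasDerivAt_diag (h : DifferentiableAt ℝ (Function.uncurry H) (t, t)) :
    HasDerivAt (fun s => H s s) (deriv (fun s => H s t) t + deriv (fun r => H t r) t) t := by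
  have hd := h.hasFDerivAt.comp_hasDerivAt (f := fun s => (s, s)) t
    ((hasDerivAt_id t).prodMk (hasDerivAt_id t))
  rw [(hasDerivAt_partial_left h).deriv, (hasDerivAt_partial_right h).deriv,
    ← map_add, Prod.mk_add_mk, add_zero, zero_add]
  exact hd

lemma ContDiff.uncurry_deriv_right {m n : WithTop ℕ∞}
    (hH : ContDiff ℝ n (Function.uncurry H)) (hmn : m + 1 ≤ n) :
    ContDiff ℝ m (Function.uncurry fun t τ => deriv (fun r => H t r) τ) := by
  have hd : Differentiable ℝ (Function.uncurry H) :=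
    hH.differentiable (ne_of_gt (lt_of_lt_of_le (by simp) hmn))
  have : (Function.uncurry fun t τ => deriv (fun r => H t r) τ)
      = fun p => fderiv ℝ (Function.uncurry H) p (0, 1) :=
    funext fun p => (hasDerivAt_partial_right (hd p)).deriv
  rw [this]
  exact (hH.fderiv_right hmn).clm_apply contDiff_const

lemma ContDiff.continuous_uncurry_deriv_left (hH : ContDiff ℝ 1 (Function.uncurry H)) :
    Continuous (Function.uncurry fun t τ => deriv (fun s => H s τ) t) := by
  have : (Function.uncurry fun t τ => deriv (fun s => H s τ) t)
      = fun p => fderiv ℝ (Function.uncurry H) p (1, 0) :=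
    funext fun p => (hasDerivAt_partial_left (hH.differentiable one_ne_zero p)).deriv
  rw [this]
  exact (hH.continuous_fderiv one_ne_zero).clm_apply continuous_const

end PartialDerivatives

lemma intervalIntegrable_iterPrim {u : ℝ → ℝ} {T : ℝ}
    (hu : IntervalIntegrable u volume 0 T) : ∀ k, IntervalIntegrable (iterPrim u k) volume 0 T
  | 0 => hu
  | k + 1 => (continuousOn_primitive_interval' (intervalIntegrable_iterPrim hu k)
      left_mem_uIcc).intervalIntegrable

theorem quadratic_kernel_ibp
    (T : ℝ) (hT : 0 < T) (m : ℕ) (H : ℝ → ℝ → ℂ)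
    (hH : ContDiff ℝ 2 (Function.uncurry H))
    (u : ℝ → ℝ)
    (hu : MeasureTheory.MemLp u 2 (MeasureTheory.volume.restrict (Set.Ioc 0 T)))
    (hbc : iterPrim u (m + 1) T = 0) :
    (∫ t in (0:ℝ)..T, (iterPrim u m t : ℂ) * ∫ τ in (0:ℝ)..t, (iterPrim u m τ : ℂ) * H t τ)
      = (∫ t in (0:ℝ)..T, (iterPrim u (m + 1) t : ℂ) ^ 2 *
            ((1 / 2) * deriv (fun s => H s s) t - deriv (fun s => H s t) t))
        + ∫ t in (0:ℝ)..T, (iterPrim u (m + 1) t : ℂ) *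
            ∫ τ in (0:ℝ)..t, (iterPrim u (m + 1) τ : ℂ) *
              deriv (fun s => deriv (fun r => H s r) τ) t := by
  have hv := intervalIntegrable_iterPrim
    ((intervalIntegrable_iff_integrableOn_Ioc_of_le hT.le).2 (hu.integrable one_le_two)) m
  have hd : Differentiable ℝ (Function.uncurry H) := hH.differentiable two_ne_zero
  have hH₂ : ContDiff ℝ 1 (Function.uncurry fun t τ => deriv (fun r => H t r) τ) :=
    hH.uncurry_deriv_right (by norm_num)
  have hdiag t := hasDerivAt_diag (hd (t, t))
  have key := integral_mul_integral_mul_kernel_eq hT.le (f := fun t => (iterPrim u m t : ℂ))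
    (F := fun t => (iterPrim u (m + 1) t : ℂ)) ⟨hv.1.ofReal, hv.2.ofReal⟩
    (fun t _ => by simp [iterPrim, integral_ofReal]) (by simp [iterPrim]) (by simp [hbc])
    (fun t τ => (hasDerivAt_partial_right (hd (t, τ))).differentiableAt.hasDerivAt)
    (fun t τ => (hasDerivAt_partial_left
      (hH₂.differentiable one_ne_zero (t, τ))).differentiableAt.hasDerivAt)
    hdiag hH₂.continuous hH₂.continuous_uncurry_deriv_left
    (((hH.of_le one_le_two).continuous_uncurry_deriv_left.add hH₂.continuous).comp
      (continuous_id.prodMk continuous_id))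
  rw [key]
  congr 1
  exact integral_congr fun t _ => by rw [(hdiag t).deriv]; ring
end

section
/- Let μ ∈ H^{11}((0,1),ℝ) with μ′(0)=μ′(1)=μ⁽³⁾(0)=μ⁽³⁾(1)=0, and let φ_j(x) = √2 sin(jπx) for j ∈ ℕ*. Then for every fixed q ∈ ℕ*, as j → ∞: ⟨μφ_q, φ_j⟩ = (12q/(π⁶ j⁷)) ((−1)^{j+q} μ⁽⁵⁾(1) − μ⁽⁵⁾(0)) + o(1/j⁷), where ⟨f,g⟩ = ∫₀¹ f(x)g(x) dx. In particular, the sequence (j⁷⟨μφ_q, φ_j⟩)_j is bounded. -/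
/-!
Writing `2 sin(qπx) sin(jπx) = cos((j-q)πx) - cos((j+q)πx)`, it suffices to expand
`∫₀¹ μ(x) cos(cx) dx` for `c = (j ∓ q)π`, where `sin c = 0` and `cos c = (-1)^(j+q)`. Each pair of
integrations by parts leaves only the boundary values of an odd derivative of `μ`; those of `μ'`
and `μ'''` vanish, so after eight of them
`∫₀¹ μ(x) cos(cx) dx = ((-1)^(j+q) μ⁽⁵⁾(1) - μ⁽⁵⁾(0)) / c⁶ + O(1/c⁸)` uniformly in `c`.
With eight integrations by parts rather than seven the remainder is `O(1/j⁸)`, so no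
Riemann–Lebesgue argument is needed, and `j⁷ (1/((j-q)π)⁶ - 1/((j+q)π)⁶) → 12q/π⁶` gives the
leading term.
-/

open MeasureTheory intervalIntegral Filter

open Real Topology Interval

theorem integral_mul_cos_eq {h h' : ℝ → ℝ} {a b c : ℝ}
    (hh : ∀ x ∈ [[a, b]], HasDerivAt h (h' x) x) (hh' : IntervalIntegrable h' volume a b)
    (hc : c ≠ 0) :
    ∫ x in a..b, h x * cos (c * x)
      = (h b * sin (c * b) - h a * sin (c * a)) / c - (∫ x in a..b, h' x * sin (c * x)) / c := by
  have hsin : ∀ x ∈ [[a, b]], HasDerivAt (fun y => sin (c * y) / c) (cos (c * x)) x :=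
    fun x _ => (((hasDerivAt_id' x).const_mul c).sin.div_const c).congr_deriv (by field_simp)
  rw [intervalIntegral.integral_mul_deriv_eq_deriv_mul hh hsin hh'
    ((by fun_prop : Continuous fun x => cos (c * x)).intervalIntegrable _ _)]
  simp only [← mul_div_assoc, intervalIntegral.integral_div]
  ring

theorem integral_mul_sin_eq {h h' : ℝ → ℝ} {a b c : ℝ}
    (hh : ∀ x ∈ [[a, b]], HasDerivAt h (h' x) x) (hh' : IntervalIntegrable h' volume a b)
    (hc : c ≠ 0) :
    ∫ x in a..b, h x * sin (c * x)
      = (h a * cos (c * a) - h b * cos (c * b)) / c + (∫ x in a..b, h' x * cos (c * x)) / c := by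
  have hcos : ∀ x ∈ [[a, b]], HasDerivAt (fun y => -cos (c * y) / c) (sin (c * x)) x :=
    fun x _ => (((hasDerivAt_id' x).const_mul c).cos.neg.div_const c).congr_deriv (by field_simp)
  rw [intervalIntegral.integral_mul_deriv_eq_deriv_mul hh hcos hh'
    ((by fun_prop : Continuous fun x => sin (c * x)).intervalIntegrable _ _)]
  simp only [← mul_div_assoc, mul_neg, neg_div, intervalIntegral.integral_neg,
    intervalIntegral.integral_div]
  ring

theorem integral_iteratedDeriv_mul_cos_eq {f : ℝ → ℝ} {n : ℕ} {c : ℝ}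
    (hf : ContDiff ℝ (n + 2) f) (hc : c ≠ 0) (hs : sin c = 0) :
    ∫ x in (0:ℝ)..1, iteratedDeriv n f x * cos (c * x)
      = (cos c * iteratedDeriv (n + 1) f 1 - iteratedDeriv (n + 1) f 0) / c ^ 2
        - (∫ x in (0:ℝ)..1, iteratedDeriv (n + 2) f x * cos (c * x)) / c ^ 2 := by
  have hderiv (m : ℕ) (hm : m < n + 2) (x : ℝ) :
      HasDerivAt (iteratedDeriv m f) (iteratedDeriv (m + 1) f x) x := by
    rw [iteratedDeriv_succ]
    exact ((hf.differentiable_iteratedDeriv m (by exact_mod_cast hm)) x).hasDerivAt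
  have hint (m : ℕ) (hm : m ≤ n + 2) : IntervalIntegrable (iteratedDeriv m f) volume 0 1 :=
    (hf.continuous_iteratedDeriv m (by exact_mod_cast hm)).intervalIntegrable _ _
  rw [integral_mul_cos_eq (fun x _ => hderiv n (by omega) x) (hint (n + 1) (by omega)) hc,
    integral_mul_sin_eq (fun x _ => hderiv (n + 1) (by omega) x) (hint (n + 2) (by omega)) hc]
  simp only [mul_one, mul_zero, sin_zero, cos_zero, hs]
  field_simp
  ring

theorem integral_mul_cos_eq_of_deriv_eq_zero {μ : ℝ → ℝ} {c : ℝ} (hμ : ContDiff ℝ 8 μ)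
    (h1 : deriv μ 0 = 0) (h1' : deriv μ 1 = 0)
    (h3 : iteratedDeriv 3 μ 0 = 0) (h3' : iteratedDeriv 3 μ 1 = 0)
    (hc : c ≠ 0) (hs : sin c = 0) :
    ∫ x in (0:ℝ)..1, μ x * cos (c * x)
      = (cos c * iteratedDeriv 5 μ 1 - iteratedDeriv 5 μ 0) / c ^ 6
        - (cos c * iteratedDeriv 7 μ 1 - iteratedDeriv 7 μ 0
            - ∫ x in (0:ℝ)..1, iteratedDeriv 8 μ x * cos (c * x)) / c ^ 8 := by
  have step (n : ℕ) (hn : n ≤ 6) := integral_iteratedDeriv_mul_cos_eq (n := n)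
    (hμ.of_le (by exact_mod_cast (by omega : n + 2 ≤ 8))) hc hs
  have e0 := step 0 (by norm_num)
  rw [iteratedDeriv_zero, zero_add, iteratedDeriv_one] at e0
  rw [e0, step 2 (by norm_num), step 4 (by norm_num), step 6 (by norm_num), h1, h1', h3, h3']
  field_simp
  ring

theorem abs_integral_mul_cos_le {g : ℝ → ℝ} {a b : ℝ} (hg : Continuous g) (hab : a ≤ b) (c : ℝ) :
    |∫ x in a..b, g x * cos (c * x)| ≤ ∫ x in a..b, |g x| := by
  refine (abs_integral_le_integral_abs hab).trans (integral_mono_on hab ?_ ?_ fun x _ => ?_)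
  · exact (by fun_prop : Continuous fun x => |g x * cos (c * x)|).intervalIntegrable _ _
  · exact hg.abs.intervalIntegrable _ _
  · rw [abs_mul]
    exact mul_le_of_le_one_right (abs_nonneg _) (abs_cos_le_one _)

theorem abs_integral_mul_cos_sub_le {μ : ℝ → ℝ} {c : ℝ} (hμ : ContDiff ℝ 8 μ)
    (h1 : deriv μ 0 = 0) (h1' : deriv μ 1 = 0)
    (h3 : iteratedDeriv 3 μ 0 = 0) (h3' : iteratedDeriv 3 μ 1 = 0)
    (hc : c ≠ 0) (hs : sin c = 0) :
    |(∫ x in (0:ℝ)..1, μ x * cos (c * x))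
        - (cos c * iteratedDeriv 5 μ 1 - iteratedDeriv 5 μ 0) / c ^ 6|
      ≤ (|iteratedDeriv 7 μ 1| + |iteratedDeriv 7 μ 0|
          + ∫ x in (0:ℝ)..1, |iteratedDeriv 8 μ x|) / c ^ 8 := by
  rw [integral_mul_cos_eq_of_deriv_eq_zero hμ h1 h1' h3 h3' hc hs, sub_sub_cancel_left, abs_neg,
    abs_div, abs_of_pos (by positivity : 0 < c ^ 8)]
  gcongr
  have hcos : |cos c| ≤ 1 := abs_cos_le_one c
  have hrem := abs_integral_mul_cos_le (hμ.continuous_iteratedDeriv 8 le_rfl) zero_le_one c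
  calc _ ≤ |cos c * iteratedDeriv 7 μ 1| + |iteratedDeriv 7 μ 0|
        + |∫ x in (0:ℝ)..1, iteratedDeriv 8 μ x * cos (c * x)| :=
          (abs_sub _ _).trans (add_le_add_left (abs_sub _ _) _)
    _ ≤ _ := by
      rw [abs_mul]
      gcongr
      exact mul_le_of_le_one_left (abs_nonneg _) hcos

theorem eventually_mul_add_pos {a b : ℝ} (hb : 0 < b) : ∀ᶠ x in atTop, 0 < x * b + a :=
  ((tendsto_id.atTop_mul_const hb).atTop_add tendsto_const_nhds).eventually_gt_atTop 0

theorem tendsto_pow_div_mul_add_pow {a b : ℝ} (hb : 0 < b) :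
    Tendsto (fun x : ℝ => x ^ 7 / (x * b + a) ^ 8) atTop (𝓝 0) := by
  have hg : ContinuousAt (fun u : ℝ => u / (b + a * u) ^ 8) 0 :=
    continuousAt_id.div (by fun_prop) (by simp [hb.ne'])
  have := hg.tendsto.comp tendsto_inv_atTop_zero
  simp only [zero_div] at this
  refine this.congr' ?_
  filter_upwards [eventually_gt_atTop 0, eventually_mul_add_pos (a := a) hb] with x hx hxba
  simp only [Function.comp_apply]
  field_simp

theorem tendsto_pow_mul_inv_pow_sub_inv_pow {a b : ℝ} (hb : 0 < b) :
    Tendsto (fun x : ℝ => x ^ 7 * (1 / (x * b - a) ^ 6 - 1 / (x * b + a) ^ 6))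
      atTop (𝓝 (12 * a / b ^ 7)) := by
  -- `(x b + a)⁶ - (x b - a)⁶ = 12 a b⁵ x⁵ + 40 a³ b³ x³ + 12 a⁵ b x`, seen in the variable `u = 1/x`
  set g : ℝ → ℝ := fun u => (12 * a * b ^ 5 + 40 * a ^ 3 * b ^ 3 * u ^ 2
      + 12 * a ^ 5 * b * u ^ 4) / ((b - a * u) ^ 6 * (b + a * u) ^ 6)
  have hg : ContinuousAt g 0 := ContinuousAt.div (by fun_prop) (by fun_prop) (by simp [hb.ne'])
  have hg0 : g 0 = 12 * a / b ^ 7 := by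
    simp only [g]
    field_simp [hb.ne']
    ring
  rw [← hg0]
  refine (hg.tendsto.comp tendsto_inv_atTop_zero).congr' ?_
  filter_upwards [eventually_gt_atTop 0, eventually_mul_add_pos (a := a) hb,
    eventually_mul_add_pos (a := -a) hb] with x hx hxba hxba'
  rw [← sub_eq_add_neg] at hxba'
  have e₁ : b - a * x⁻¹ = (x * b - a) / x := by field_simp
  have e₂ : b + a * x⁻¹ = (x * b + a) / x := by field_simp
  have : b * x + a ≠ 0 := by linarith
  have : b * x - a ≠ 0 := by linarith
  simp only [Function.comp_apply, g, e₁, e₂, div_pow]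
  field_simp
  ring

theorem integral_mul_sqrt_two_sin_mul_sqrt_two_sin {μ : ℝ → ℝ} (hμ : Continuous μ)
    (s t a b : ℝ) :
    ∫ x in s..t, μ x * (√2 * sin (a * x)) * (√2 * sin (b * x))
      = (∫ x in s..t, μ x * cos ((b - a) * x)) - ∫ x in s..t, μ x * cos ((b + a) * x) := by
  rw [← intervalIntegral.integral_sub ((by fun_prop : Continuous _).intervalIntegrable _ _)
    ((by fun_prop : Continuous _).intervalIntegrable _ _)]
  refine intervalIntegral.integral_congr fun x _ => ?_
  have h2 : √2 * √2 = 2 := Real.mul_self_sqrt zero_le_two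
  rw [sub_mul, add_mul]
  linear_combination μ x * sin (a * x) * sin (b * x) * h2
    + μ x * two_mul_sin_mul_sin (b * x) (a * x)

theorem tendsto_pow_mul_integral_mul_cos_sub {μ : ℝ → ℝ} (hμ : ContDiff ℝ 8 μ)
    (h1 : deriv μ 0 = 0) (h1' : deriv μ 1 = 0)
    (h3 : iteratedDeriv 3 μ 0 = 0) (h3' : iteratedDeriv 3 μ 1 = 0) {a : ℝ}
    (hs : ∀ j : ℕ, sin (j * π + a) = 0) :
    Tendsto (fun j : ℕ => (j : ℝ) ^ 7 * ((∫ x in (0:ℝ)..1, μ x * cos ((j * π + a) * x))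
      - (cos (j * π + a) * iteratedDeriv 5 μ 1 - iteratedDeriv 5 μ 0) / (j * π + a) ^ 6))
      atTop (𝓝 0) := by
  set K := |iteratedDeriv 7 μ 1| + |iteratedDeriv 7 μ 0| + ∫ x in (0:ℝ)..1, |iteratedDeriv 8 μ x|
  have hlim := ((tendsto_pow_div_mul_add_pow (a := a) pi_pos).comp
    tendsto_natCast_atTop_atTop).const_mul K
  rw [mul_zero] at hlim
  refine squeeze_zero_norm' ?_ hlim
  filter_upwards [tendsto_natCast_atTop_atTop.eventually (eventually_mul_add_pos pi_pos)]
    with j hj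
  rw [norm_mul, Real.norm_eq_abs, Real.norm_eq_abs, abs_of_nonneg (by positivity)]
  calc _ ≤ (j : ℝ) ^ 7 * (K / (j * π + a) ^ 8) := by
        gcongr
        exact abs_integral_mul_cos_sub_le hμ h1 h1' h3 h3' hj.ne' (hs j)
    _ = _ := by simp only [Function.comp_apply]; ring

theorem exists_forall_abs_le_of_tendsto_sub {f g : ℕ → ℝ} {C : ℝ}
    (h : Tendsto (fun j => f j - g j) atTop (𝓝 0)) (hg : ∀ j, |g j| ≤ C) :
    ∃ M, ∀ j, |f j| ≤ M := by
  obtain ⟨B, hB⟩ := isBounded_iff_forall_norm_le.mp (Metric.isBounded_range_of_tendsto _ h)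
  refine ⟨B + C, fun j => ?_⟩
  calc |f j| = |(f j - g j) + g j| := by rw [sub_add_cancel]
    _ ≤ |f j - g j| + |g j| := abs_add_le _ _
    _ ≤ B + C := add_le_add (hB _ ⟨j, rfl⟩) (hg j)

theorem dipolar_coefficient_asymptotics_general
    (μ : ℝ → ℝ) (hμ : ContDiff ℝ 11 μ)
    (hbc1 : deriv μ 0 = 0) (hbc2 : deriv μ 1 = 0)
    (hbc3 : iteratedDeriv 3 μ 0 = 0) (hbc4 : iteratedDeriv 3 μ 1 = 0)
    (q : ℕ) :
    Filter.Tendsto (fun j : ℕ =>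
        (j : ℝ) ^ 7 * (∫ x in (0:ℝ)..1,
            μ x * (Real.sqrt 2 * Real.sin (q * Real.pi * x))
              * (Real.sqrt 2 * Real.sin (j * Real.pi * x)))
          - (12 * q / Real.pi ^ 6) *
              ((-1 : ℝ) ^ (j + q) * iteratedDeriv 5 μ 1 - iteratedDeriv 5 μ 0))
      Filter.atTop (nhds 0)
    ∧ ∃ M : ℝ, ∀ j : ℕ,
        |(j : ℝ) ^ 7 * ∫ x in (0:ℝ)..1,
            μ x * (Real.sqrt 2 * Real.sin (q * Real.pi * x))
              * (Real.sqrt 2 * Real.sin (j * Real.pi * x))| ≤ M := by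
  have hμ8 : ContDiff ℝ 8 μ := hμ.of_le (by norm_num)
  set D : ℕ → ℝ := fun j => (-1 : ℝ) ^ (j + q) * iteratedDeriv 5 μ 1 - iteratedDeriv 5 μ 0
  have hD (j : ℕ) : |D j| ≤ |iteratedDeriv 5 μ 1| + |iteratedDeriv 5 μ 0| := by
    simpa [D, abs_mul] using abs_sub ((-1 : ℝ) ^ (j + q) * iteratedDeriv 5 μ 1) (iteratedDeriv 5 μ 0)
  have hleading : Tendsto (fun j : ℕ => D j * ((j : ℝ) ^ 7 * (1 / (j * π - q * π) ^ 6
      - 1 / (j * π + q * π) ^ 6) - 12 * q / π ^ 6)) atTop (𝓝 0) := by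
    have h := (tendsto_pow_mul_inv_pow_sub_inv_pow (a := q * π) pi_pos).comp
      tendsto_natCast_atTop_atTop
    rw [show 12 * ((q : ℝ) * π) / π ^ 7 = 12 * (q : ℝ) / π ^ 6 by field_simp] at h
    refine isBoundedUnder_le_mul_tendsto_zero ?_ (tendsto_sub_nhds_zero_iff.mpr h)
    exact isBoundedUnder_of ⟨_, hD⟩
  have hrem₁ := tendsto_pow_mul_integral_mul_cos_sub hμ8 hbc1 hbc2 hbc3 hbc4 (a := -(q * π))
    fun j => by simp [← sub_eq_add_neg, sin_sub]
  have hrem₂ := tendsto_pow_mul_integral_mul_cos_sub hμ8 hbc1 hbc2 hbc3 hbc4 (a := q * π)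
    fun j => by simp [sin_add]
  have hlim := (hleading.add hrem₁).sub hrem₂
  simp only [← sub_eq_add_neg, cos_sub, cos_add, cos_nat_mul_pi, sin_nat_mul_pi, zero_mul,
    add_zero, sub_zero] at hlim
  refine ⟨?asym, exists_forall_abs_le_of_tendsto_sub ?asym fun j =>
    (abs_mul _ _).trans_le (mul_le_mul_of_nonneg_left (hD j) (abs_nonneg _))⟩
  refine hlim.congr fun j => ?_
  rw [integral_mul_sqrt_two_sin_mul_sqrt_two_sin hμ.continuous]
  ring

theorem dipolar_coefficient_asymptotics
    (μ : ℝ → ℝ) (hμ : ContDiff ℝ 11 μ)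
    (hbc1 : deriv μ 0 = 0) (hbc2 : deriv μ 1 = 0)
    (hbc3 : iteratedDeriv 3 μ 0 = 0) (hbc4 : iteratedDeriv 3 μ 1 = 0)
    (q : ℕ) (hq : 0 < q) :
    Filter.Tendsto (fun j : ℕ =>
        (j : ℝ) ^ 7 * (∫ x in (0:ℝ)..1,
            μ x * (Real.sqrt 2 * Real.sin (q * Real.pi * x))
              * (Real.sqrt 2 * Real.sin (j * Real.pi * x)))
          - (12 * q / Real.pi ^ 6) *
              ((-1 : ℝ) ^ (j + q) * iteratedDeriv 5 μ 1 - iteratedDeriv 5 μ 0))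
      Filter.atTop (nhds 0)
    ∧ ∃ M : ℝ, ∀ j : ℕ,
        |(j : ℝ) ^ 7 * ∫ x in (0:ℝ)..1,
            μ x * (Real.sqrt 2 * Real.sin (q * Real.pi * x))
              * (Real.sqrt 2 * Real.sin (j * Real.pi * x))| ≤ M :=
  dipolar_coefficient_asymptotics_general μ hμ hbc1 hbc2 hbc3 hbc4 q
end
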